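/- The function f(x) = x²/2 − l_{σ,c}(x) is convex on ℝ, where l_{σ,c} is the HOW function. -/

import Mathlib

/-!
Outside `[-c, c]`, `x²/2 - l_{σ,c}(x) = φ(x² - c²)` with `φ = halfSubWelsch σ`,
`φ(s) = s/2 - σ²/2 (1 - e^{-s/σ²})` (half the identity minus the Welsch loss, in the variable
`s = x²`); inside it vanishes, which is `φ 0`. So it is `φ (max (x² - c²) 0)`. The inner map is
convex with values in `[0, ∞)`, where `φ` is convex and, as `φ' = (1 - e^{-s/σ²})/2 ≥ 0`,
nondecreasing; a convex nondecreasing function of a convex function is convex.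
-/

/-- The hybrid ordinary-Welsch (HOW) function with parameters `σ, c > 0`. -/
noncomputable def how (σ c x : ℝ) : ℝ :=
  if |x| ≤ c then x ^ 2 / 2
  else σ ^ 2 / 2 * (1 - Real.exp ((c ^ 2 - x ^ 2) / σ ^ 2)) + c ^ 2 / 2

open Real Set

noncomputable def halfSubWelsch (σ s : ℝ) : ℝ := s / 2 - σ ^ 2 / 2 * (1 - exp (-s / σ ^ 2))

theorem convexOn_halfSubWelsch (σ : ℝ) : ConvexOn ℝ univ (halfSubWelsch σ) := by
  have hexp : ConvexOn ℝ univ fun s : ℝ => exp (-s / σ ^ 2) := by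
    simpa [Function.comp_def, neg_div, div_eq_inv_mul] using
      convexOn_exp.comp_linearMap (LinearMap.mulLeft ℝ (-(σ ^ 2)⁻¹))
  refine (((hexp.smul (by positivity : 0 ≤ σ ^ 2 / 2)).add
    ((convexOn_id convex_univ).smul (by norm_num : (0 : ℝ) ≤ 1 / 2))).add_const
    (-(σ ^ 2 / 2))).congr fun s _ => ?_
  simp only [halfSubWelsch, Pi.add_apply, smul_eq_mul, id]
  ring

theorem hasDerivAt_halfSubWelsch {σ : ℝ} (hσ : σ ≠ 0) (s : ℝ) :
    HasDerivAt (halfSubWelsch σ) ((1 - exp (-s / σ ^ 2)) / 2) s := by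
  have hexp : HasDerivAt (fun s => exp (-s / σ ^ 2)) (exp (-s / σ ^ 2) * (-1 / σ ^ 2)) s :=
    ((hasDerivAt_neg s).div_const (σ ^ 2)).exp
  refine (((hasDerivAt_id' s).div_const 2).sub
    ((hexp.const_sub 1).const_mul (σ ^ 2 / 2))).congr_deriv ?_
  field_simp

theorem monotoneOn_halfSubWelsch (σ : ℝ) : MonotoneOn (halfSubWelsch σ) (Ici 0) := by
  rcases eq_or_ne σ 0 with rfl | hσ
  · have h0 : halfSubWelsch 0 = fun s => s / 2 := by ext; simp [halfSubWelsch]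
    exact h0 ▸ (monotone_id.div_const (zero_le_two (α := ℝ))).monotoneOn _
  refine monotoneOn_of_hasDerivWithinAt_nonneg (convex_Ici 0)
    (fun s _ => (hasDerivAt_halfSubWelsch hσ s).continuousAt.continuousWithinAt)
    (fun s _ => (hasDerivAt_halfSubWelsch hσ s).hasDerivWithinAt) fun s hs => ?_
  rw [interior_Ici, mem_Ioi] at hs
  have : exp (-s / σ ^ 2) ≤ 1 :=
    exp_le_one_iff.mpr (div_nonpos_of_nonpos_of_nonneg (by linarith) (sq_nonneg σ))
  linarith

theorem sq_div_two_sub_how (σ : ℝ) {c : ℝ} (hc : 0 ≤ c) (x : ℝ) :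
    x ^ 2 / 2 - how σ c x = halfSubWelsch σ (max (x ^ 2 - c ^ 2) 0) := by
  unfold how halfSubWelsch
  split_ifs with hx
  · rw [max_eq_right (by nlinarith [abs_le.mp hx])]
    simp
  · rw [max_eq_left (by nlinarith [abs_nonneg x, sq_abs x, not_le.mp hx]), neg_sub]
    ring

theorem convexOn_max_sq_sub_sq_zero (c : ℝ) :
    ConvexOn ℝ univ fun x : ℝ => max (x ^ 2 - c ^ 2) 0 :=
  ((Even.convexOn_pow even_two).sub (concaveOn_const _ convex_univ)).sup
    (convexOn_const 0 convex_univ)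

theorem how_quadratic_minus_convex_general (σ c : ℝ) (hc : 0 < c) :
    ConvexOn ℝ Set.univ (fun x : ℝ => x ^ 2 / 2 - how σ c x) := by
  set q : ℝ → ℝ := fun x => max (x ^ 2 - c ^ 2) 0
  have hq_image : q '' univ ⊆ Ici 0 := by
    rintro _ ⟨x, -, rfl⟩
    exact le_max_right (x ^ 2 - c ^ 2) 0
  have hq_image_convex : Convex ℝ (q '' univ) :=
    (isPreconnected_univ.image q (by fun_prop)).convex
  have hcomp := ((convexOn_halfSubWelsch σ).subset (subset_univ _) hq_image_convex).comp
    (convexOn_max_sq_sub_sq_zero c) ((monotoneOn_halfSubWelsch σ).mono hq_image)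
  exact hcomp.congr fun x _ => (sq_div_two_sub_how σ hc.le x).symm

/-- `x ↦ x²/2 − l_{σ,c}(x)` is convex on ℝ, where `l_{σ,c}` is HOW. -/
theorem how_quadratic_minus_convex (σ c : ℝ) (hσ : 0 < σ) (hc : 0 < c) :
    ConvexOn ℝ Set.univ (fun x : ℝ => x ^ 2 / 2 - how σ c x) :=
  how_quadratic_minus_convex_general σ c hc
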